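/- arXiv:2001.09176 — 4 statements merged into one kernel-verified Lean document; each statement's English description precedes it below -/
import Mathlib

section
/- Let G be a finite simple graph and {B_1, …, B_j} a strongly disjoint set of bouquets of G of type (i, j). Then the set of all stems of B_1, …, B_j is a self disjoint set of type (i, i+j) in G (regarded as a 2-uniform simple hypergraph), i.e. it consists of i edges whose union has i + j vertices. -/
variable {V : Type*} [DecidableEq V] [Fintype V]

/-- The union of a family of edges. -/
def unionEdges (M : Finset (Finset V)) : Finset V := M.biUnion id

/-- `E` is the edge set of a simple hypergraph: every edge has at least two
vertices and no edge is contained in another distinct edge. -/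
def IsSimpleHypergraph (E : Finset (Finset V)) : Prop :=
  (∀ S ∈ E, 2 ≤ S.card) ∧ ∀ S ∈ E, ∀ T ∈ E, S ⊆ T → S = T

/-- A family `M` of edges of `E` is a semi-induced matching if no edge of `E`
outside `M` is contained in the union of the members of `M`. -/
def IsSemiInducedMatching (E M : Finset (Finset V)) : Prop :=
  M ⊆ E ∧ ∀ S ∈ E, S ∉ M → ¬ S ⊆ unionEdges M

/-- An induced matching is a semi-induced matching whose edges are pairwise disjoint. -/
def IsInducedMatching (E M : Finset (Finset V)) : Prop :=
  IsSemiInducedMatching E M ∧ ∀ S ∈ M, ∀ T ∈ M, S ≠ T → Disjoint S T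

/-- A self semi-induced matching is a semi-induced matching in which no member
is contained in the union of the other members. -/
def IsSelfSemiInducedMatching (E M : Finset (Finset V)) : Prop :=
  IsSemiInducedMatching E M ∧ ∀ S ∈ M, ¬ S ⊆ unionEdges (M.erase S)

/-- A self-contained semi-induced matching. -/
def IsSelfContainedSemiInducedMatching (E M : Finset (Finset V)) : Prop :=
  M ⊆ E ∧
  (∀ S ∈ E, S ∉ M → ¬ S ⊆ unionEdges M ∨ ∃ T ∈ M, T ⊆ S ∪ unionEdges (M.erase T)) ∧
  ∀ S ∈ M, ¬ S ⊆ unionEdges (M.erase S)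

/-- A self disjoint set of edges. -/
def IsSelfDisjointSet (E M : Finset (Finset V)) : Prop :=
  M ⊆ E ∧ (∀ S ∈ M, ¬ S ⊆ unionEdges (M.erase S)) ∧
  ∃ M₀ ⊆ M, IsInducedMatching E M₀ ∧
    ∀ S ∈ M, S ∉ M₀ → ∃ T ∈ M₀, (S \ T).card = 1

/-- A self semi-disjoint set of edges. -/
def IsSelfSemiDisjointSet (E M : Finset (Finset V)) : Prop :=
  M ⊆ E ∧ (∀ S ∈ M, ¬ S ⊆ unionEdges (M.erase S)) ∧
  ∃ M₀ ⊆ M, IsSemiInducedMatching E M₀ ∧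
    ∀ S ∈ M, S ∉ M₀ → ∃ T ∈ M₀, (S \ T).card = 1

/-- A bouquet of the (2-uniform) graph with edge set `E`, given by its root `b.1`
and its nonempty set of flowers `b.2`; its stems must be edges of `E`. -/
def IsBouquet (E : Finset (Finset V)) (b : V × Finset V) : Prop :=
  b.2.Nonempty ∧ b.1 ∉ b.2 ∧ ∀ y ∈ b.2, ({b.1, y} : Finset V) ∈ E

/-- The vertex set of a bouquet. -/
def bouquetVerts (b : V × Finset V) : Finset V := insert b.1 b.2

/-- The set of stems of a bouquet. -/
def stems (b : V × Finset V) : Finset (Finset V) :=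
  b.2.image fun y => ({b.1, y} : Finset V)

/-- A strongly disjoint set of bouquets: the vertex sets of the bouquets are
pairwise disjoint and one can choose one stem from each bouquet such that the
chosen stems form an induced matching. -/
def IsStronglyDisjointBouquets (E : Finset (Finset V)) (B : Finset (V × Finset V)) : Prop :=
  (∀ b ∈ B, IsBouquet E b) ∧
  (∀ b ∈ B, ∀ b' ∈ B, b ≠ b' → Disjoint (bouquetVerts b) (bouquetVerts b')) ∧
  ∃ f : V × Finset V → V, (∀ b ∈ B, f b ∈ b.2) ∧
    IsInducedMatching E (B.image fun b => ({b.1, f b} : Finset V))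

/-
The chosen stems form the required induced matching, and every other stem `{x, y}` of a bouquet with
root `x` differs from the chosen stem `{x, f}` of that bouquet only in its flower `y`. Since
the bouquets are vertex-disjoint and a root is never a flower, `y` lies in no other stem; hence
no stem is contained in the union of the others, and distinct flowers give distinct stems. So
there are `i` stems, and their union is the disjoint union of the `j` vertex sets, of `i + j`
vertices in all.
-/

open Finset

section

variable {α : Type*} [DecidableEq α]

theorem not_subset_unionEdges_erase_of_mem {M : Finset (Finset α)} {S : Finset α} {v : α}
    (hv : v ∈ S) (huniq : ∀ T ∈ M, v ∈ T → T = S) : ¬ S ⊆ unionEdges (M.erase S) := by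
  intro hsub
  obtain ⟨T, hT, hvT⟩ := mem_biUnion.mp (hsub hv)
  exact (mem_erase.mp hT).1 (huniq T (mem_erase.mp hT).2 hvT)

theorem unionEdges_biUnion {ι : Type*} (B : Finset ι) (F : ι → Finset (Finset α)) :
    unionEdges (B.biUnion F) = B.biUnion fun b => unionEdges (F b) := by
  simp only [unionEdges, biUnion_biUnion]

theorem card_pair_sdiff_pair {x y z : α} (hyx : y ≠ x) (hyz : y ≠ z) :
    (({x, y} : Finset α) \ {x, z}).card = 1 := by
  rw [insert_sdiff_insert, sdiff_eq_self_of_disjoint (by simp [hyx, hyz]), card_singleton]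

section Bouquet

variable {b b' : α × Finset α}

theorem mem_stems {S : Finset α} : S ∈ stems b ↔ ∃ y ∈ b.2, {b.1, y} = S :=
  mem_image

theorem pair_mem_stems {y : α} (hy : y ∈ b.2) : {b.1, y} ∈ stems b :=
  mem_image_of_mem _ hy

theorem root_mem_bouquetVerts : b.1 ∈ bouquetVerts b :=
  mem_insert_self _ _

theorem flower_mem_bouquetVerts {y : α} (hy : y ∈ b.2) : y ∈ bouquetVerts b :=
  mem_insert_of_mem hy

theorem stem_subset_bouquetVerts {S : Finset α} (hS : S ∈ stems b) : S ⊆ bouquetVerts b := by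
  obtain ⟨y, hy, rfl⟩ := mem_stems.mp hS
  exact insert_subset root_mem_bouquetVerts (singleton_subset_iff.mpr (flower_mem_bouquetVerts hy))

theorem card_stems (hroot : b.1 ∉ b.2) : (stems b).card = b.2.card := by
  refine card_image_of_injOn fun y hy y' _ hyy' => ?_
  have hy_mem : y ∈ ({b.1, y'} : Finset α) := hyy' ▸ mem_insert_of_mem (mem_singleton_self y)
  rcases mem_insert.mp hy_mem with rfl | hy'
  · exact absurd hy hroot
  · exact mem_singleton.mp hy'

theorem card_bouquetVerts (hroot : b.1 ∉ b.2) : (bouquetVerts b).card = b.2.card + 1 :=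
  card_insert_of_notMem hroot

theorem unionEdges_stems (hb : b.2.Nonempty) : unionEdges (stems b) = bouquetVerts b := by
  refine subset_antisymm (biUnion_subset.mpr fun S hS => stem_subset_bouquetVerts hS) ?_
  obtain ⟨y₀, hy₀⟩ := hb
  intro v hv
  rcases mem_insert.mp hv with rfl | hv
  · exact mem_biUnion.mpr ⟨_, pair_mem_stems hy₀, mem_insert_self _ _⟩
  · exact mem_biUnion.mpr ⟨_, pair_mem_stems hv, mem_insert_of_mem (mem_singleton_self v)⟩

theorem disjoint_stems (h : Disjoint (bouquetVerts b) (bouquetVerts b')) :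
    Disjoint (stems b) (stems b') := by
  refine disjoint_left.mpr fun S hS hS' => ?_
  obtain ⟨y, -, rfl⟩ := mem_stems.mp hS
  exact disjoint_left.mp h root_mem_bouquetVerts
    (stem_subset_bouquetVerts hS' (mem_insert_self _ _))

end Bouquet

section BouquetFamily

variable {B : Finset (α × Finset α)}

theorem mem_biUnion_stems {S : Finset α} :
    S ∈ B.biUnion stems ↔ ∃ b ∈ B, ∃ y ∈ b.2, {b.1, y} = S := by
  simp only [mem_biUnion, mem_stems]

theorem biUnion_stems_subset {E : Finset (Finset α)} (hB : ∀ b ∈ B, IsBouquet E b) :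
    B.biUnion stems ⊆ E := by
  intro S hS
  obtain ⟨b, hb, y, hy, rfl⟩ := mem_biUnion_stems.mp hS
  exact (hB b hb).2.2 y hy

theorem image_pair_subset_biUnion_stems {f : α × Finset α → α}
    (hf : ∀ b ∈ B, f b ∈ b.2) :
    B.image (fun b => ({b.1, f b} : Finset α)) ⊆ B.biUnion stems :=
  image_subset_iff.mpr fun b hb => mem_biUnion.mpr ⟨b, hb, pair_mem_stems (hf b hb)⟩

theorem eq_of_flower_mem_stem (hdisj : (B : Set (α × Finset α)).PairwiseDisjoint bouquetVerts)
    {b : α × Finset α} {y : α} {T : Finset α} (hb : b ∈ B) (hroot : b.1 ∉ b.2)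
    (hy : y ∈ b.2) (hT : T ∈ B.biUnion stems) (hyT : y ∈ T) : T = {b.1, y} := by
  obtain ⟨b', hb', hTb'⟩ := mem_biUnion.mp hT
  obtain rfl : b = b' := by
    by_contra hne
    exact disjoint_left.mp (hdisj hb hb' hne) (flower_mem_bouquetVerts hy)
      (stem_subset_bouquetVerts hTb' hyT)
  obtain ⟨y', -, rfl⟩ := mem_stems.mp hTb'
  rcases mem_insert.mp hyT with rfl | hyy'
  · exact absurd hy hroot
  · rw [mem_singleton.mp hyy']

theorem not_subset_unionEdges_erase_biUnion_stems
    (hdisj : (B : Set (α × Finset α)).PairwiseDisjoint bouquetVerts)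
    (hroot : ∀ b ∈ B, b.1 ∉ b.2) {S : Finset α} (hS : S ∈ B.biUnion stems) :
    ¬ S ⊆ unionEdges ((B.biUnion stems).erase S) := by
  obtain ⟨b, hb, y, hy, rfl⟩ := mem_biUnion_stems.mp hS
  exact not_subset_unionEdges_erase_of_mem (mem_insert_of_mem (mem_singleton_self y))
    fun T hT hyT => eq_of_flower_mem_stem hdisj hb (hroot b hb) hy hT hyT

theorem card_biUnion_stems (hdisj : (B : Set (α × Finset α)).PairwiseDisjoint bouquetVerts)
    (hroot : ∀ b ∈ B, b.1 ∉ b.2) : (B.biUnion stems).card = ∑ b ∈ B, b.2.card := by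
  rw [card_biUnion fun b hb b' hb' hne => disjoint_stems (hdisj hb hb' hne)]
  exact sum_congr rfl fun b hb => card_stems (hroot b hb)

theorem card_unionEdges_biUnion_stems {E : Finset (Finset α)}
    (hdisj : (B : Set (α × Finset α)).PairwiseDisjoint bouquetVerts)
    (hB : ∀ b ∈ B, IsBouquet E b) :
    (unionEdges (B.biUnion stems)).card = ∑ b ∈ B, b.2.card + B.card := by
  rw [unionEdges_biUnion, biUnion_congr rfl fun b hb => unionEdges_stems (hB b hb).1,
    card_biUnion hdisj, card_eq_sum_ones B, ← sum_add_distrib]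
  exact sum_congr rfl fun b hb => card_bouquetVerts (hB b hb).2.1

end BouquetFamily

end

theorem stronglyDisjointBouquets_stems_selfDisjoint_general
    (E : Finset (Finset V))
    (B : Finset (V × Finset V)) (hB : IsStronglyDisjointBouquets E B)
    (i j : ℕ) (hi : ∑ b ∈ B, b.2.card = i) (hj : B.card = j) :
    IsSelfDisjointSet E (B.biUnion stems) ∧
    (B.biUnion stems).card = i ∧
    (unionEdges (B.biUnion stems)).card = i + j := by
  obtain ⟨hbq, hdisj, f, hf, hM₀⟩ := hB
  have hroot : ∀ b ∈ B, b.1 ∉ b.2 := fun b hb => (hbq b hb).2.1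
  subst hi hj
  refine ⟨⟨biUnion_stems_subset hbq,
    fun S => not_subset_unionEdges_erase_biUnion_stems hdisj hroot,
    _, image_pair_subset_biUnion_stems hf, hM₀, ?_⟩,
    card_biUnion_stems hdisj hroot, card_unionEdges_biUnion_stems hdisj hbq⟩
  intro S hS hS₀
  obtain ⟨b, hb, y, hy, rfl⟩ := mem_biUnion_stems.mp hS
  refine ⟨_, mem_image_of_mem _ hb,
    card_pair_sdiff_pair (ne_of_mem_of_not_mem hy (hroot b hb)) ?_⟩
  rintro rfl
  exact hS₀ (mem_image_of_mem _ hb)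

/-- if `B` is a strongly disjoint set of bouquets of a graph `G`
of type `(i, j)` (`i` flowers in total, `j` bouquets), then the set of all
stems of the bouquets of `B` is a self disjoint set of type `(i, i + j)`. -/
theorem stronglyDisjointBouquets_stems_selfDisjoint
    (E : Finset (Finset V)) (hH : IsSimpleHypergraph E)
    (h2 : ∀ S ∈ E, S.card = 2)
    (B : Finset (V × Finset V)) (hB : IsStronglyDisjointBouquets E B)
    (i j : ℕ) (hi : ∑ b ∈ B, b.2.card = i) (hj : B.card = j) :
    IsSelfDisjointSet E (B.biUnion stems) ∧
    (B.biUnion stems).card = i ∧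
    (unionEdges (B.biUnion stems)).card = i + j :=
  stronglyDisjointBouquets_stems_selfDisjoint_general E B hB i j hi hj
end

section
/- Let G be a finite simple graph. Every self semi-disjoint set in G (regarded as a 2-uniform simple hypergraph) is a self disjoint set in G. -/
/-!
Every edge of `M` has a vertex lying in no other edge of `M`. In a graph an edge therefore meets
the other edges of `M` in at most one vertex, its non-private one, so the edges of `M₀` form
stars around shared vertices. A maximal pairwise disjoint subfamily `M₁` of `M₀` keeps one edge
of each star; it is still semi-induced because the discarded edges keep their private vertices,
and an edge meeting a discarded edge of `M₀` meets it at the centre of its star, hence meets an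
edge of `M₁` there.
-/

variable {V : Type*} [DecidableEq V] [Fintype V]

namespace Finset

variable {α : Type*} [DecidableEq α]

theorem eq_of_ne_of_ne_of_card_le_two {s : Finset α} (hs : s.card ≤ 2) {x u w : α} (hx : x ∈ s)
    (hu : u ∈ s) (hw : w ∈ s) (hux : u ≠ x) (hwx : w ≠ x) : u = w := by
  have hcard : (s.erase x).card ≤ 1 := by rw [card_erase_of_mem hx]; omega
  exact card_le_one.mp hcard u (mem_erase.mpr ⟨hux, hu⟩) w (mem_erase.mpr ⟨hwx, hw⟩)

theorem card_sdiff_eq_one_of_card_eq_two {s t : Finset α} (hs : s.card = 2) (ht : t.card ≤ 2)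
    (hst : s ≠ t) {v : α} (hvs : v ∈ s) (hvt : v ∈ t) : (s \ t).card = 1 := by
  have hpos : (s \ t).Nonempty :=
    sdiff_nonempty.mpr fun h => hst (eq_of_subset_of_card_le h (by omega))
  have hle : (s \ t).card ≤ (s.erase v).card := card_le_card fun y hy =>
    mem_erase.mpr ⟨by rintro rfl; exact (mem_sdiff.mp hy).2 hvt, (mem_sdiff.mp hy).1⟩
  rw [card_erase_of_mem hvs, hs] at hle
  have := hpos.card_pos
  omega

theorem exists_mem_mem_of_card_sdiff_lt {s t : Finset α} (hst : (s \ t).card < s.card) :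
    ∃ v ∈ s, v ∈ t := by
  have hinter := card_sdiff_add_card_inter s t
  obtain ⟨v, hv⟩ := card_pos.mp (show 0 < (s ∩ t).card by omega)
  exact ⟨v, (mem_inter.mp hv).1, (mem_inter.mp hv).2⟩

theorem exists_maximal_pairwise_disjoint_subset (s : Finset (Finset α)) :
    ∃ t ⊆ s, (t : Set (Finset α)).Pairwise Disjoint ∧
      ∀ a ∈ s, a ∉ t → ∃ b ∈ t, ¬ Disjoint a b := by
  classical
  obtain ⟨t, ht, hmax⟩ := exists_maximal
    (s := s.powerset.filter fun t : Finset (Finset α) => (t : Set (Finset α)).Pairwise Disjoint)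
    ⟨∅, by simp⟩
  rw [mem_filter, mem_powerset] at ht
  refine ⟨t, ht.1, ht.2, fun a ha hat => ?_⟩
  by_contra! hdisj
  have hins : insert a t ∈ s.powerset.filter
      fun t : Finset (Finset α) => (t : Set (Finset α)).Pairwise Disjoint := by
    rw [mem_filter, mem_powerset, coe_insert, Set.pairwise_insert_of_symm]
    exact ⟨insert_subset ha ht.1, ht.2, fun b hb _ => hdisj b hb⟩
  exact hat (hmax hins (subset_insert a t) (mem_insert_self a t))

end Finset

section

variable {α : Type*} [DecidableEq α]

@[simp]
theorem mem_unionEdges {M : Finset (Finset α)} {x : α} : x ∈ unionEdges M ↔ ∃ S ∈ M, x ∈ S := by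
  simp [unionEdges]

theorem exists_private_vertex {M : Finset (Finset α)} {S : Finset α}
    (hS : ¬ S ⊆ unionEdges (M.erase S)) : ∃ x ∈ S, ∀ T ∈ M, T ≠ S → x ∉ T := by
  obtain ⟨x, hxS, hx⟩ := Finset.not_subset.mp hS
  exact ⟨x, hxS, fun T hT hTS hxT =>
    hx (mem_unionEdges.mpr ⟨T, Finset.mem_erase.mpr ⟨hTS, hT⟩, hxT⟩)⟩

theorem shared_vertex_eq {M : Finset (Finset α)} (hM : ∀ S ∈ M, ¬ S ⊆ unionEdges (M.erase S))
    {T T₁ T₂ : Finset α} (hT : T ∈ M) (hT2 : T.card ≤ 2) (hT₁ : T₁ ∈ M) (hT₂ : T₂ ∈ M)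
    (hT₁T : T₁ ≠ T) (hT₂T : T₂ ≠ T) {u w : α} (hu : u ∈ T) (hu₁ : u ∈ T₁) (hw : w ∈ T)
    (hw₂ : w ∈ T₂) : u = w := by
  obtain ⟨x, hxT, hx⟩ := exists_private_vertex (hM T hT)
  exact Finset.eq_of_ne_of_ne_of_card_le_two hT2 hxT hu hw
    (by rintro rfl; exact hx T₁ hT₁ hT₁T hu₁) (by rintro rfl; exact hx T₂ hT₂ hT₂T hw₂)

theorem IsSemiInducedMatching.of_subset {E M M₀ M₁ : Finset (Finset α)}
    (hM₀ : IsSemiInducedMatching E M₀) (hM₀M : M₀ ⊆ M)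
    (hM : ∀ S ∈ M, ¬ S ⊆ unionEdges (M.erase S)) (hM₁M₀ : M₁ ⊆ M₀) :
    IsSemiInducedMatching E M₁ := by
  refine ⟨hM₁M₀.trans hM₀.1, fun S hS hSM₁ hsub => ?_⟩
  by_cases hSM₀ : S ∈ M₀
  · obtain ⟨x, hxS, hx⟩ := exists_private_vertex (hM S (hM₀M hSM₀))
    obtain ⟨T, hT, hxT⟩ := mem_unionEdges.mp (hsub hxS)
    exact hx T (hM₀M (hM₁M₀ hT)) (by rintro rfl; exact hSM₁ hT) hxT
  · exact hM₀.2 S hS hSM₀ (hsub.trans (Finset.biUnion_subset_biUnion_of_subset_left _ hM₁M₀))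

theorem exists_card_sdiff_eq_one_of_maximal_disjoint {M M₀ M₁ : Finset (Finset α)}
    (h2 : ∀ S ∈ M, S.card = 2) (hM : ∀ S ∈ M, ¬ S ⊆ unionEdges (M.erase S))
    (hM₀M : M₀ ⊆ M) (hcover : ∀ S ∈ M, S ∉ M₀ → ∃ T ∈ M₀, (S \ T).card = 1)
    (hM₁M₀ : M₁ ⊆ M₀) (hmax : ∀ T ∈ M₀, T ∉ M₁ → ∃ T' ∈ M₁, ¬ Disjoint T T')
    {S : Finset α} (hS : S ∈ M) (hSM₁ : S ∉ M₁) : ∃ T ∈ M₁, (S \ T).card = 1 := by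
  suffices ∃ T ∈ M₁, S ≠ T ∧ ∃ v ∈ S, v ∈ T by
    obtain ⟨T, hT, hST, v, hvS, hvT⟩ := this
    exact ⟨T, hT, Finset.card_sdiff_eq_one_of_card_eq_two (h2 S hS) (h2 T (hM₀M (hM₁M₀ hT))).le
      hST hvS hvT⟩
  by_cases hSM₀ : S ∈ M₀
  · obtain ⟨T, hT, hST⟩ := hmax S hSM₀ hSM₁
    exact ⟨T, hT, (ne_of_mem_of_not_mem hT hSM₁).symm, Finset.not_disjoint_iff.mp hST⟩
  obtain ⟨T, hT, hST⟩ := hcover S hS hSM₀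
  obtain ⟨v, hvS, hvT⟩ := Finset.exists_mem_mem_of_card_sdiff_lt (by rw [hST, h2 S hS]; decide)
  by_cases hTM₁ : T ∈ M₁
  · exact ⟨T, hTM₁, (ne_of_mem_of_not_mem hT hSM₀).symm, v, hvS, hvT⟩
  -- `T` meets both `S` and an edge `T'` of `M₁`, necessarily at its one non-private vertex
  obtain ⟨T', hT', hTT'⟩ := hmax T hT hTM₁
  obtain ⟨w, hwT, hwT'⟩ := Finset.not_disjoint_iff.mp hTT'
  have hvw : v = w := shared_vertex_eq hM (hM₀M hT) (h2 T (hM₀M hT)).le hS (hM₀M (hM₁M₀ hT'))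
    (ne_of_mem_of_not_mem hT hSM₀).symm (ne_of_mem_of_not_mem hT' hTM₁) hvT hvS hwT hwT'
  exact ⟨T', hT', (ne_of_mem_of_not_mem (hM₁M₀ hT') hSM₀).symm, v, hvS, hvw ▸ hwT'⟩

end

theorem selfSemiDisjoint_isSelfDisjoint_of_graph_general
    (E : Finset (Finset V))
    (h2 : ∀ S ∈ E, S.card = 2)
    (M : Finset (Finset V)) (hM : IsSelfSemiDisjointSet E M) :
    IsSelfDisjointSet E M := by
  obtain ⟨hME, hself, M₀, hM₀M, hM₀, hcover⟩ := hM
  obtain ⟨M₁, hM₁M₀, hM₁disj, hmax⟩ := Finset.exists_maximal_pairwise_disjoint_subset M₀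
  have h2M : ∀ S ∈ M, S.card = 2 := fun S hS => h2 S (hME hS)
  exact ⟨hME, hself, M₁, hM₁M₀.trans hM₀M,
    ⟨hM₀.of_subset hM₀M hself hM₁M₀, fun S hS T hT hST => hM₁disj hS hT hST⟩,
    fun S hS hSM₁ => exists_card_sdiff_eq_one_of_maximal_disjoint h2M hself hM₀M hcover hM₁M₀
      hmax hS hSM₁⟩

/-- in a graph (a 2-uniform simple hypergraph), every self
semi-disjoint set is a self disjoint set. -/
theorem selfSemiDisjoint_isSelfDisjoint_of_graph
    (E : Finset (Finset V)) (hH : IsSimpleHypergraph E)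
    (h2 : ∀ S ∈ E, S.card = 2)
    (M : Finset (Finset V)) (hM : IsSelfSemiDisjointSet E M) :
    IsSelfDisjointSet E M :=
  selfSemiDisjoint_isSelfDisjoint_of_graph_general E h2 M hM
end

section
/- Let d ≥ 2 and let H be a d-uniform simple hypergraph such that any two distinct edges with nonempty intersection meet in exactly d − 1 vertices. Let x be a simplicial vertex of H, let S be an edge of H containing x, and let z ∈ N(S). Then there exists an edge E of H with E \ S = {z} and x ∉ E. -/
variable {V : Type*} [DecidableEq V] [Fintype V]

/-- The closed neighborhood `N[x]` of a vertex. -/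
def closedNbhd (E : Finset (Finset V)) (x : V) : Finset V :=
  insert x ((E.filter fun S => x ∈ S).biUnion id)

/-- A simplicial vertex of a `d`-uniform hypergraph: every `d`-subset of `N[x]`
is an edge. -/
def IsSimplicialVertex (E : Finset (Finset V)) (d : ℕ) (x : V) : Prop :=
  ∀ T ⊆ closedNbhd E x, T.card = d → T ∈ E

/-- `N(S)`, the union of `T \ S` over all edges `T` meeting `S`. -/
def edgeNbhd (E : Finset (Finset V)) (S : Finset V) : Finset V :=
  (E.filter fun T => (T ∩ S).Nonempty).biUnion fun T => T \ S

/-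
If the edge `T` witnessing `z ∈ N(S)` avoids `x`, it is the required edge, since `|T ∩ S| = d - 1`
forces `T \ S = {z}`. Otherwise `z ∈ N[x]`, and trading `x` for `z` in `S` gives a `d`-subset of
`N[x]`, which is an edge because `x` is simplicial.
-/

section

variable {α : Type*} [DecidableEq α]

theorem Finset.sdiff_eq_singleton_of_card_inter {S T : Finset α} {z : α} (hzT : z ∈ T)
    (hzS : z ∉ S) (hcard : (T ∩ S).card + 1 = T.card) : T \ S = {z} := by
  have hone : (T \ S).card = 1 := by
    have := Finset.card_sdiff_add_card_inter T S
    omega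
  obtain ⟨a, ha⟩ := Finset.card_eq_one.mp hone
  have hz : z ∈ T \ S := Finset.mem_sdiff.mpr ⟨hzT, hzS⟩
  rw [ha, Finset.mem_singleton] at hz
  rw [ha, hz]

theorem Finset.insert_erase_sdiff_self {S : Finset α} {x z : α} (hzS : z ∉ S) :
    insert z (S.erase x) \ S = {z} := by
  ext a
  simp only [Finset.mem_sdiff, Finset.mem_insert, Finset.mem_erase, Finset.mem_singleton]
  constructor
  · rintro ⟨rfl | ⟨-, haS⟩, haS'⟩
    · rfl
    · exact absurd haS haS'
  · rintro rfl
    exact ⟨Or.inl rfl, hzS⟩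

theorem mem_edgeNbhd {E : Finset (Finset α)} {S : Finset α} {z : α} :
    z ∈ edgeNbhd E S ↔ ∃ T ∈ E, (T ∩ S).Nonempty ∧ z ∈ T ∧ z ∉ S := by
  simp only [edgeNbhd, Finset.mem_biUnion, Finset.mem_filter, Finset.mem_sdiff, and_assoc]

theorem subset_closedNbhd {E : Finset (Finset α)} {T : Finset α} {x : α} (hT : T ∈ E)
    (hxT : x ∈ T) : T ⊆ closedNbhd E x := fun _ hy =>
  Finset.mem_insert_of_mem (Finset.mem_biUnion.mpr ⟨T, Finset.mem_filter.mpr ⟨hT, hxT⟩, hy⟩)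

theorem IsSimplicialVertex.insert_erase_mem {E : Finset (Finset α)} {d : ℕ} {x z : α}
    (hx : IsSimplicialVertex E d x) {S : Finset α} (hS : S ∈ E) (hSd : S.card = d)
    (hxS : x ∈ S) (hzS : z ∉ S) (hz : z ∈ closedNbhd E x) :
    insert z (S.erase x) ∈ E := by
  refine hx _ (Finset.insert_subset hz ((Finset.erase_subset x S).trans
    (subset_closedNbhd hS hxS))) ?_
  rw [Finset.card_insert_of_notMem (fun h => hzS (Finset.mem_of_mem_erase h)),
    Finset.card_erase_of_mem hxS, ← hSd, Nat.sub_add_cancel (Finset.card_pos.mpr ⟨x, hxS⟩)]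

end

theorem exists_edge_diff_singleton_general
    (E : Finset (Finset V)) (d : ℕ)
    (hUnif : ∀ S ∈ E, S.card = d)
    (hInt : ∀ S ∈ E, ∀ T ∈ E, S ≠ T → (S ∩ T).Nonempty → (S ∩ T).card = d - 1)
    (x : V) (hx : IsSimplicialVertex E d x)
    (S : Finset V) (hS : S ∈ E) (hxS : x ∈ S)
    (z : V) (hz : z ∈ edgeNbhd E S) :
    ∃ T ∈ E, T \ S = {z} ∧ x ∉ T := by
  obtain ⟨T, hT, hTS, hzT, hzS⟩ := mem_edgeNbhd.mp hz
  by_cases hxT : x ∈ T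
  · refine ⟨insert z (S.erase x),
      hx.insert_erase_mem hS (hUnif S hS) hxS hzS (subset_closedNbhd hT hxT hzT),
      Finset.insert_erase_sdiff_self hzS, ?_⟩
    simp only [Finset.mem_insert, Finset.notMem_erase, or_false]
    rintro rfl
    exact hzS hxS
  · have hcard : (T ∩ S).card + 1 = T.card := by
      have hd : 1 ≤ d := hUnif S hS ▸ Finset.card_pos.mpr ⟨x, hxS⟩
      rw [hInt T hT S hS (fun h => hzS (h ▸ hzT)) hTS, hUnif T hT]
      omega
    exact ⟨T, hT, Finset.sdiff_eq_singleton_of_card_inter hzT hzS hcard, hxT⟩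

/-- in a `d`-uniform simple hypergraph in which any two distinct
meeting edges intersect in exactly `d - 1` vertices, if `x` is a simplicial
vertex, `S` an edge containing `x` and `z ∈ N(S)`, then there is an edge `T`
with `T \ S = {z}` and `x ∉ T`. -/
theorem exists_edge_diff_singleton
    (E : Finset (Finset V)) (d : ℕ) (hd : 2 ≤ d)
    (hH : IsSimpleHypergraph E) (hUnif : ∀ S ∈ E, S.card = d)
    (hInt : ∀ S ∈ E, ∀ T ∈ E, S ≠ T → (S ∩ T).Nonempty → (S ∩ T).card = d - 1)
    (x : V) (hx : IsSimplicialVertex E d x)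
    (S : Finset V) (hS : S ∈ E) (hxS : x ∈ S)
    (z : V) (hz : z ∈ edgeNbhd E S) :
    ∃ T ∈ E, T \ S = {z} ∧ x ∉ T :=
  exists_edge_diff_singleton_general E d hUnif hInt x hx S hS hxS z hz
end

section
/- Let H be a d-uniform simple hypergraph and let S be a self disjoint set in H consisting of i edges whose union has j vertices, with a witnessing induced matching S_0 ⊆ S of size s (as in the definition of self disjoint set). Then j − i ≤ (d − 1)·s. -/
variable {V : Type*} [DecidableEq V] [Fintype V]

/-!
The edges of the matching `M₀` cover at most `d * s` vertices, and every other edge of `M`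
misses some edge of `M₀` in exactly one vertex, so it adds at most one new vertex to the union.
Hence `j ≤ d * s + (i - s)`.
-/

section
variable {α : Type*} [DecidableEq α]

theorem subset_unionEdges {M : Finset (Finset α)} {T : Finset α} (hT : T ∈ M) :
    T ⊆ unionEdges M :=
  Finset.subset_biUnion_of_mem id hT

theorem card_unionEdges_le_card_mul {M : Finset (Finset α)} {d : ℕ}
    (h : ∀ S ∈ M, S.card ≤ d) : (unionEdges M).card ≤ M.card * d :=
  Finset.card_biUnion_le_card_mul M id d h

theorem card_sdiff_unionEdges_le {M : Finset (Finset α)} {S T : Finset α} (hT : T ∈ M) :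
    (S \ unionEdges M).card ≤ (S \ T).card :=
  Finset.card_le_card (Finset.sdiff_subset_sdiff le_rfl (subset_unionEdges hT))

theorem unionEdges_subset_union_biUnion_sdiff (M M₀ : Finset (Finset α)) :
    unionEdges M ⊆ unionEdges M₀ ∪ (M \ M₀).biUnion (· \ unionEdges M₀) := by
  intro v hv
  obtain ⟨S, hSM, hvS⟩ := Finset.mem_biUnion.1 hv
  by_cases hv₀ : v ∈ unionEdges M₀
  · exact Finset.mem_union_left _ hv₀
  · have hS : S ∉ M₀ := fun hS => hv₀ (subset_unionEdges hS hvS)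
    exact Finset.mem_union_right _ <|
      Finset.mem_biUnion.2 ⟨S, Finset.mem_sdiff.2 ⟨hSM, hS⟩, Finset.mem_sdiff.2 ⟨hvS, hv₀⟩⟩

theorem card_unionEdges_le_add_card_sdiff {M M₀ : Finset (Finset α)} (hM₀ : M₀ ⊆ M)
    (h : ∀ S ∈ M \ M₀, (S \ unionEdges M₀).card ≤ 1) :
    (unionEdges M).card ≤ (unionEdges M₀).card + (M.card - M₀.card) := by
  have hnew : ((M \ M₀).biUnion (· \ unionEdges M₀)).card ≤ M.card - M₀.card := by
    simpa [Finset.card_sdiff_of_subset hM₀] using Finset.card_biUnion_le_card_mul _ _ 1 h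
  calc (unionEdges M).card
      ≤ (unionEdges M₀ ∪ (M \ M₀).biUnion (· \ unionEdges M₀)).card :=
        Finset.card_le_card (unionEdges_subset_union_biUnion_sdiff M M₀)
    _ ≤ (unionEdges M₀).card + (M.card - M₀.card) :=
        (Finset.card_union_le _ _).trans (Nat.add_le_add_left hnew _)

end

theorem selfDisjointSet_union_card_bound_general
    (E : Finset (Finset V)) (d : ℕ)
    (hUnif : ∀ S ∈ E, S.card = d)
    (M M₀ : Finset (Finset V)) (hME : M ⊆ E)
    (hM₀M : M₀ ⊆ M)
    (hwit : ∀ S ∈ M, S ∉ M₀ → ∃ T ∈ M₀, (S \ T).card = 1)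
    (i j s : ℕ) (hi : M.card = i) (hj : (unionEdges M).card = j)
    (hs : M₀.card = s) :
    j - i ≤ (d - 1) * s := by
  have hmatching : (unionEdges M₀).card ≤ s * d :=
    hs ▸ card_unionEdges_le_card_mul fun S hS => (hUnif S (hME (hM₀M hS))).le
  have hone_new : ∀ S ∈ M \ M₀, (S \ unionEdges M₀).card ≤ 1 := by
    intro S hS
    obtain ⟨T, hT, hST⟩ := hwit S (Finset.mem_sdiff.1 hS).1 (Finset.mem_sdiff.1 hS).2
    exact hST ▸ card_sdiff_unionEdges_le hT
  have hunion := card_unionEdges_le_add_card_sdiff hM₀M hone_new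
  have hsi : s ≤ i := hi ▸ hs ▸ Finset.card_le_card hM₀M
  rw [hi, hj, hs] at hunion
  rw [Nat.sub_one_mul, mul_comm]
  omega

/-- if `M` is a self disjoint set of type `(i, j)` in a
`d`-uniform simple hypergraph, with witnessing induced matching `M₀ ⊆ M` of
size `s`, then `j - i ≤ (d - 1) * s`. -/
theorem selfDisjointSet_union_card_bound
    (E : Finset (Finset V)) (d : ℕ)
    (hH : IsSimpleHypergraph E) (hUnif : ∀ S ∈ E, S.card = d)
    (M M₀ : Finset (Finset V)) (hME : M ⊆ E)
    (hself : ∀ S ∈ M, ¬ S ⊆ unionEdges (M.erase S))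
    (hM₀M : M₀ ⊆ M) (hM₀ : IsInducedMatching E M₀)
    (hwit : ∀ S ∈ M, S ∉ M₀ → ∃ T ∈ M₀, (S \ T).card = 1)
    (i j s : ℕ) (hi : M.card = i) (hj : (unionEdges M).card = j)
    (hs : M₀.card = s) :
    j - i ≤ (d - 1) * s :=
  selfDisjointSet_union_card_bound_general E d hUnif M M₀ hME hM₀M hwit i j s hi hj hs
end
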